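/- arXiv:2503.17611 — 2 statements merged into one kernel-verified Lean document; each statement's English description precedes it below -/
import Mathlib

section
/- Let f, g : ℕ → ℕ be polynomial functions with coefficients in ℕ ∪ {0} (mapping positive naturals to positive naturals), each of which is continuous as a map from the Macías space M(ℕ) to itself. Then the pointwise product h(x) := f(x)·g(x) is continuous as a map from M(ℕ) to itself. -/
open Topology

/-- For `n` a positive natural, `σ_n = {m ∈ ℕ⁺ : gcd(n,m) = 1}`. -/
def sigmaSet (n : ℕ+) : Set ℕ+ := {m : ℕ+ | Nat.Coprime (n : ℕ) (m : ℕ)}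

/-- The Macías topology `τ_M` on the positive naturals, generated by the sets `σ_n`. -/
def tauM : TopologicalSpace ℕ+ :=
  TopologicalSpace.generateFrom (Set.range sigmaSet)

/-- `f : ℕ⁺ → ℕ⁺` is a polynomial function with coefficients in `ℕ ∪ {0}`. -/
def IsPolyFun (f : ℕ+ → ℕ+) : Prop :=
  ∃ (n : ℕ) (a : ℕ → ℕ),
    ∀ x : ℕ+, (f x : ℕ) = ∑ k ∈ Finset.range (n + 1), a k * (x : ℕ) ^ k

theorem mem_sigmaSet_mul {n a b : ℕ+} :
    a * b ∈ sigmaSet n ↔ a ∈ sigmaSet n ∧ b ∈ sigmaSet n :=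
  Nat.coprime_mul_iff_right

theorem isOpen_sigmaSet (n : ℕ+) : IsOpen[tauM] (sigmaSet n) :=
  TopologicalSpace.isOpen_generateFrom_of_mem ⟨n, rfl⟩

theorem continuous_tauM_mul {X : Type*} (t : TopologicalSpace X) {f g : X → ℕ+}
    (hf : Continuous[t, tauM] f) (hg : Continuous[t, tauM] g) :
    Continuous[t, tauM] (fun x => f x * g x) := by
  rw [tauM, continuous_generateFrom_iff]
  rintro s ⟨n, rfl⟩
  have hpreimage : (fun x => f x * g x) ⁻¹' sigmaSet n
      = f ⁻¹' sigmaSet n ∩ g ⁻¹' sigmaSet n :=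
    Set.ext fun _ => mem_sigmaSet_mul
  rw [hpreimage]
  exact (continuous_def.mp hf _ (isOpen_sigmaSet n)).inter
    (continuous_def.mp hg _ (isOpen_sigmaSet n))

theorem mul_poly_continuous_general (f g : ℕ+ → ℕ+)
    (hfc : Continuous[tauM, tauM] f) (hgc : Continuous[tauM, tauM] g) :
    Continuous[tauM, tauM] (fun x : ℕ+ => f x * g x) :=
  continuous_tauM_mul tauM hfc hgc

theorem mul_poly_continuous (f g : ℕ+ → ℕ+) (hf : IsPolyFun f) (hg : IsPolyFun g)
    (hfc : Continuous[tauM, tauM] f) (hgc : Continuous[tauM, tauM] g) :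
    Continuous[tauM, tauM] (fun x : ℕ+ => f x * g x) :=
  mul_poly_continuous_general f g hfc hgc
end

section
/- Let f(x) = Σ_{k=0}^{n} a_k x^k be a polynomial function from ℕ to ℕ with coefficients a_0, …, a_n ∈ ℕ ∪ {0}, such that a_0 ≠ 0 and a_i ≠ 0 for at least one index i ∈ {1, 2, …, n}. Then f is not continuous as a map from the Macías space M(ℕ) to itself. -/
/-!
Every open set of `τ_M` containing `1` contains some `σ_m`, and `σ_m` meets every nonzero residue
class modulo a prime `p`. Since `f(r) mod p` only depends on `r mod p`, continuity of `f`
at `1` therefore forces: if `p ∣ f(t)` for some `t` with `p ∤ t`, then `p ∣ f(1)`.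

Schur's trick produces a prime violating this. With `a = f(0) > 0`, `c = f(1)` and
`t = 1 + a c²` we have `f(t) ≡ c (mod a c²)` and `f(t) > c`, so `f(t) = c u` with `u > 1` and
`u ≡ 1 (mod a c)`. A prime `p ∣ u` divides `f(t)` but not `c`, and not `t` either, since otherwise
`p ∣ f(t) ≡ f(0) = a (mod p)`.
-/

open Topology

theorem sigmaSet_one : sigmaSet 1 = Set.univ :=
  Set.eq_univ_of_forall fun m => Nat.coprime_one_left m

theorem sigmaSet_mul (a b : ℕ+) : sigmaSet (a * b) = sigmaSet a ∩ sigmaSet b := by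
  ext m
  simp [sigmaSet, Nat.coprime_mul_iff_left]

theorem isTopologicalBasis_sigmaSet :
    TopologicalSpace.IsTopologicalBasis (t := tauM) (Set.range sigmaSet) := by
  refine @TopologicalSpace.IsTopologicalBasis.mk _ tauM _ ?_ ?_ rfl
  · rintro _ ⟨a, rfl⟩ _ ⟨b, rfl⟩ x hx
    exact ⟨sigmaSet (a * b), ⟨a * b, rfl⟩, sigmaSet_mul a b ▸ hx, (sigmaSet_mul a b).le⟩
  · exact Set.sUnion_eq_univ_iff.mpr fun _ => ⟨_, ⟨1, rfl⟩, sigmaSet_one ▸ trivial⟩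

theorem exists_sigmaSet_subset {U : Set ℕ+} (hU : IsOpen[tauM] U) (h1 : 1 ∈ U) :
    ∃ m, sigmaSet m ⊆ U := by
  obtain ⟨_, ⟨m, rfl⟩, -, hm⟩ :=
    isTopologicalBasis_sigmaSet.exists_subset_of_mem_open (t := tauM) h1 hU
  exact ⟨m, hm⟩

theorem Nat.exists_coprime_mul_modEq {q t : ℕ} (m : ℕ) [NeZero q] [NeZero m]
    (h : t.Coprime q) : ∃ r, r.Coprime (q * m) ∧ r ≡ t [MOD q] := by
  obtain ⟨v, hv⟩ := ZMod.unitsMap_surjective (dvd_mul_right q m) (ZMod.unitOfCoprime t h)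
  refine ⟨(v : ZMod (q * m)).val, ZMod.val_coe_unit_coprime v, ?_⟩
  rw [← ZMod.natCast_eq_natCast_iff, ZMod.natCast_val, ← ZMod.unitsMap_val (dvd_mul_right q m),
    hv, ZMod.coe_unitOfCoprime]

theorem sum_mul_pow_modEq (s : Finset ℕ) (a : ℕ → ℕ) {N x y : ℕ} (h : x ≡ y [MOD N]) :
    ∑ k ∈ s, a k * x ^ k ≡ ∑ k ∈ s, a k * y ^ k [MOD N] := by
  rw [← ZMod.natCast_eq_natCast_iff] at h ⊢
  push_cast
  rw [h]

theorem strictMono_sum_mul_pow (s : Finset ℕ) (a : ℕ → ℕ) {i : ℕ} (hi : i ∈ s) (hi0 : i ≠ 0)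
    (hai : a i ≠ 0) : StrictMono fun x => ∑ k ∈ s, a k * x ^ k := fun _ _ hxy =>
  Finset.sum_lt_sum (fun k _ => Nat.mul_le_mul_left _ (Nat.pow_le_pow_left hxy.le k))
    ⟨i, hi, Nat.mul_lt_mul_of_pos_left (Nat.pow_lt_pow_left hxy hi0) (Nat.pos_of_ne_zero hai)⟩

theorem sum_mul_pow_zero (n : ℕ) (a : ℕ → ℕ) : ∑ k ∈ Finset.range (n + 1), a k * 0 ^ k = a 0 := by
  simp [Finset.sum_range_succ']

theorem exists_prime_dvd_apply_not_dvd_of_strictMono {g : ℕ → ℕ} (hg : StrictMono g)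
    (hcong : ∀ {N x y : ℕ}, x ≡ y [MOD N] → g x ≡ g y [MOD N]) (h0 : g 0 ≠ 0) :
    ∃ p t, p.Prime ∧ p ∣ g t ∧ ¬ p ∣ t ∧ ¬ p ∣ g 1 := by
  set a := g 0
  set c := g 1
  have hac : a < c := hg zero_lt_one
  set t := 1 + a * c ^ 2
  have hpos : 0 < a * c ^ 2 := Nat.mul_pos (Nat.pos_of_ne_zero h0) (pow_pos (by omega) 2)
  have hct : c < g t := hg (Nat.lt_add_of_pos_right hpos)
  obtain ⟨j, hj⟩ : a * c ^ 2 ∣ g t - c :=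
    (Nat.modEq_iff_dvd' hct.le).mp (hcong (Nat.add_mod_right 1 (a * c ^ 2))).symm
  set u := 1 + j * (a * c)
  have hgt : g t = c * u := by
    rw [show g t = c + a * c ^ 2 * j by omega]
    ring
  have hu : u ≠ 1 := by
    intro hu
    rw [hu, mul_one] at hgt
    omega
  set p := u.minFac
  have hp : p.Prime := Nat.minFac_prime hu
  have hpac : p.Coprime (a * c) :=
    (((Nat.coprime_add_mul_right_right _ _ _).mpr (Nat.coprime_one_right _)).coprime_dvd_right
      (Nat.minFac_dvd u)).symm
  have hpgt : p ∣ g t := hgt ▸ (Nat.minFac_dvd u).mul_left c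
  refine ⟨p, t, hp, hpgt, fun hpt => ?_, hp.coprime_iff_not_dvd.mp hpac.coprime_mul_left_right⟩
  have hpa : p ∣ a := ((hcong (Nat.modEq_zero_iff_dvd.mpr hpt)).dvd_iff dvd_rfl).mp hpgt
  exact hp.coprime_iff_not_dvd.mp hpac.coprime_mul_right_right hpa

theorem prime_dvd_apply_one_of_continuous {f : ℕ+ → ℕ+} (hf : Continuous[tauM, tauM] f)
    {g : ℕ → ℕ} (hfg : ∀ x : ℕ+, (f x : ℕ) = g x)
    (hcong : ∀ {N x y : ℕ}, x ≡ y [MOD N] → g x ≡ g y [MOD N])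
    {p t : ℕ} (hp : p.Prime) (hpt : ¬ p ∣ t) (hpg : p ∣ g t) : p ∣ g 1 := by
  by_contra hp1
  have hU : IsOpen[tauM] (f ⁻¹' sigmaSet ⟨p, hp.pos⟩) :=
    @Continuous.isOpen_preimage _ _ tauM tauM f hf _
      (TopologicalSpace.isOpen_generateFrom_of_mem ⟨_, rfl⟩)
  have h1U : (1 : ℕ+) ∈ f ⁻¹' sigmaSet ⟨p, hp.pos⟩ := by
    simpa [sigmaSet, hfg, hp.coprime_iff_not_dvd] using hp1
  obtain ⟨m, hm⟩ := exists_sigmaSet_subset hU h1U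
  have : NeZero p := ⟨hp.ne_zero⟩
  obtain ⟨r, hr, hrt⟩ :=
    Nat.exists_coprime_mul_modEq (m : ℕ) (hp.coprime_iff_not_dvd.mpr hpt).symm
  have hr0 : 0 < r := Nat.pos_of_ne_zero fun h => hpt (Nat.modEq_zero_iff_dvd.mp (h ▸ hrt).symm)
  have hfr : p.Coprime (g r) := hfg ⟨r, hr0⟩ ▸ hm hr.coprime_mul_left_right.symm
  exact hp.coprime_iff_not_dvd.mp hfr (((hcong hrt).dvd_iff dvd_rfl).mpr hpg)

theorem poly_const_term_discontinuous (n : ℕ) (a : ℕ → ℕ) (f : ℕ+ → ℕ+)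
    (hf : ∀ x : ℕ+, (f x : ℕ) = ∑ k ∈ Finset.range (n + 1), a k * (x : ℕ) ^ k)
    (h0 : a 0 ≠ 0) (hi : ∃ i, 1 ≤ i ∧ i ≤ n ∧ a i ≠ 0) :
    ¬ Continuous[tauM, tauM] f := by
  intro hcont
  obtain ⟨i, hi1, hin, hai⟩ := hi
  have hg : StrictMono fun x => ∑ k ∈ Finset.range (n + 1), a k * x ^ k :=
    strictMono_sum_mul_pow _ a (Finset.mem_range.mpr (by omega)) (by omega) hai
  obtain ⟨p, t, hp, hpt, hpt', hp1⟩ := exists_prime_dvd_apply_not_dvd_of_strictMono hg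
    (sum_mul_pow_modEq _ a) (by rwa [sum_mul_pow_zero])
  exact hp1 (prime_dvd_apply_one_of_continuous hcont hf (sum_mul_pow_modEq _ a) hp hpt' hpt)
end
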